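/- For m, n ≥ 0 and r ≥ 0, the operator identity (XD+r)_{n+m,λ} = Σ_{k=0}^{m} Σ_{l=0}^{n} S_{r,λ}(m+r,k+r) C(n,l) (k−mλ)_{n−l,λ} X^k (XD+r)_{l,λ} D^k holds on polynomials. -/

import Mathlib

open Finset Polynomial

/-- The degenerate falling factorial `(x)_{n,λ}`. -/
noncomputable def degFall (l x : ℝ) (n : ℕ) : ℝ :=
  ∏ i ∈ Finset.range n, (x - (i : ℝ) * l)

/-- The multiplication-by-x operator `X` on polynomials. -/
noncomputable def Xop : Module.End ℝ (Polynomial ℝ) :=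
  LinearMap.mulLeft ℝ (Polynomial.X : Polynomial ℝ)

/-- The differentiation operator `D` on polynomials. -/
noncomputable def Dop : Module.End ℝ (Polynomial ℝ) :=
  Polynomial.derivative

/-- The degenerate falling factorial `(A)_{n,λ}` of an operator `A`. -/
noncomputable def opFall (l : ℝ) (A : Module.End ℝ (Polynomial ℝ)) (n : ℕ) :
    Module.End ℝ (Polynomial ℝ) :=
  ((List.range n).map (fun i => A - ((i : ℝ) * l) • (1 : Module.End ℝ (Polynomial ℝ)))).prod

lemma degFall_split (l x : ℝ) (a b : ℕ) :
    degFall l x (a + b) = degFall l x a * degFall l (x - a * l) b := by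
  unfold degFall
  rw [Finset.prod_range_add]
  congr 1
  refine Finset.prod_congr rfl fun i _ => ?_
  push_cast; ring

lemma smeval_descPoch (x : ℝ) (n : ℕ) :
    (descPochhammer ℤ n).smeval x = ∏ i ∈ Finset.range n, (x - (i : ℝ)) := by
  induction n with
  | zero => simp
  | succ n ih =>
    rw [descPochhammer_succ_right, smeval_mul, ih, Finset.prod_range_succ]
    simp [smeval_sub, smeval_X, smeval_natCast]

lemma degFall_eq (l : ℝ) (hl : l ≠ 0) (x : ℝ) (n : ℕ) :
    degFall l x n = l ^ n * (descPochhammer ℤ n).smeval (x / l) := by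
  rw [smeval_descPoch, degFall, Finset.pow_eq_prod_const, ← Finset.prod_mul_distrib]
  refine Finset.prod_congr rfl fun i _ => ?_
  field_simp

lemma degFall_vandermonde (l : ℝ) (hl : l ≠ 0) (x y : ℝ) (n : ℕ) :
    degFall l (x + y) n =
      ∑ j ∈ Finset.range (n + 1),
        (n.choose j : ℝ) * degFall l x j * degFall l y (n - j) := by
  rw [degFall_eq l hl, add_div, Ring.descPochhammer_smeval_add n (Commute.all _ _),
    Finset.Nat.sum_antidiagonal_eq_sum_range_succ_mk, Finset.mul_sum]
  refine Finset.sum_congr rfl fun j hj => ?_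
  rw [degFall_eq l hl x, degFall_eq l hl y]
  have hjn : j ≤ n := Nat.lt_succ_iff.mp (Finset.mem_range.mp hj)
  have hpow : l ^ n = l ^ j * l ^ (n - j) := by rw [← pow_add, Nat.add_sub_cancel' hjn]
  rw [hpow]; ring

lemma opFall_zero (l : ℝ) (A : Module.End ℝ (Polynomial ℝ)) : opFall l A 0 = 1 := by
  simp [opFall]

lemma opFall_succ (l : ℝ) (A : Module.End ℝ (Polynomial ℝ)) (n : ℕ) :
    opFall l A (n + 1) = opFall l A n *
      (A - ((n : ℝ) * l) • (1 : Module.End ℝ (Polynomial ℝ))) := by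
  simp [opFall, List.range_succ]

lemma A_apply (r t : ℕ) :
    (Xop * Dop + (r : ℝ) • (1 : Module.End ℝ (Polynomial ℝ))) (X ^ t : Polynomial ℝ)
      = ((t : ℝ) + r) • (X ^ t : Polynomial ℝ) := by
  cases t with
  | zero => simp [Xop, Dop, Module.End.mul_apply]
  | succ s =>
    simp only [LinearMap.add_apply, Module.End.mul_apply, LinearMap.smul_apply,
      Module.End.one_apply, Xop, Dop, LinearMap.mulLeft_apply]
    show X * derivative (X ^ (s+1)) + _ = _
    rw [derivative_X_pow, smul_eq_C_mul, smul_eq_C_mul]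
    push_cast [C_add]
    ring

lemma opFall_apply (l : ℝ) (r j t : ℕ) :
    (opFall l (Xop * Dop + (r : ℝ) • (1 : Module.End ℝ (Polynomial ℝ))) j)
        (X ^ t : Polynomial ℝ)
      = degFall l ((t : ℝ) + r) j • (X ^ t : Polynomial ℝ) := by
  induction j with
  | zero => simp [opFall_zero, degFall]
  | succ j ih =>
    rw [opFall_succ, Module.End.mul_apply, LinearMap.sub_apply, A_apply,
      LinearMap.smul_apply, Module.End.one_apply, ← sub_smul, map_smul, ih,
      smul_smul]
    congr 1
    rw [degFall, degFall, Finset.prod_range_succ]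
    ring

lemma Dpow_apply (k t : ℕ) :
    (Dop ^ k) (X ^ t : Polynomial ℝ)
      = (t.descFactorial k : ℝ) • (X ^ (t - k) : Polynomial ℝ) := by
  rw [Module.End.pow_apply]
  show (⇑(derivative (R := ℝ)))^[k] (X ^ t) = _
  rw [iterate_derivative_X_pow_eq_smul]

lemma Xpow_apply (k : ℕ) (p : Polynomial ℝ) :
    (Xop ^ k) p = X ^ k * p := by
  rw [Xop, LinearMap.pow_mulLeft, LinearMap.mulLeft_apply]

lemma cast_descFactorial (t k : ℕ) :
    ((t.descFactorial k : ℕ) : ℝ) = ∏ i ∈ Finset.range k, ((t : ℝ) - i) := by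
  induction k with
  | zero => simp
  | succ k ih =>
    rw [Nat.descFactorial_succ, Finset.prod_range_succ, ← ih]
    rcases lt_or_ge k t with h | h
    · rw [Nat.cast_mul, Nat.cast_sub h.le]
      ring
    · have h0 : t - k = 0 := Nat.sub_eq_zero_of_le h
      rw [h0]
      rcases h.lt_or_eq with h' | h'
      · rw [Nat.descFactorial_eq_zero_iff_lt.mpr h']
        simp
      · subst h'
        simp

lemma comp_apply (l : ℝ) (r k j t : ℕ) :
    (Xop ^ k * opFall l (Xop * Dop + (r : ℝ) • (1 : Module.End ℝ (Polynomial ℝ))) j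
        * Dop ^ k) (X ^ t : Polynomial ℝ)
      = ((∏ i ∈ Finset.range k, ((t : ℝ) - i)) * degFall l ((t : ℝ) - k + r) j)
          • (X ^ t : Polynomial ℝ) := by
  simp only [Module.End.mul_apply, Dpow_apply, map_smul, opFall_apply, Xpow_apply,
    mul_smul_comm, smul_smul, ← pow_add, cast_descFactorial]
  rcases le_or_gt k t with h | h
  · rw [Nat.add_sub_cancel' h, Nat.cast_sub h]
  · rw [Finset.prod_eq_zero (Finset.mem_range.mpr h) (sub_self (t : ℝ))]
    simp

lemma scalar_id (l : ℝ) (hl : l ≠ 0) (r : ℕ) (Sr : ℕ → ℕ → ℝ)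
    (hSr : ∀ m : ℕ, ∀ z : ℝ,
      degFall l (z + r) m =
        ∑ k ∈ Finset.range (m + 1), Sr m k * ∏ i ∈ Finset.range k, (z - (i : ℝ)))
    (n m : ℕ) (z : ℝ) :
    degFall l (z + r) (n + m) =
      ∑ k ∈ Finset.range (m + 1), ∑ j ∈ Finset.range (n + 1),
        Sr m k * (n.choose j : ℝ) * degFall l ((k : ℝ) - (m : ℝ) * l) (n - j) *
          ((∏ i ∈ Finset.range k, (z - (i : ℝ))) * degFall l (z - k + r) j) := by
  have h1 : degFall l (z + r) (n + m)
      = degFall l (z + r) m * degFall l (z + r - m * l) n := by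
    rw [show n + m = m + n from Nat.add_comm n m, degFall_split]
  rw [h1, hSr m z, Finset.sum_mul]
  refine Finset.sum_congr rfl fun k hk => ?_
  have h2 : z + (r : ℝ) - m * l = (z - k + r) + ((k : ℝ) - m * l) := by ring
  rw [h2, degFall_vandermonde l hl, Finset.mul_sum]
  exact Finset.sum_congr rfl fun j hj => by ring

/-- `(XD+r)_{n+m,λ} = Σ_{k=0}^m Σ_{l=0}^n S_{r,λ}(m+r,k+r) C(n,l) (k−mλ)_{n−l,λ}
X^k (XD+r)_{l,λ} D^k`, where the degenerate r-Stirling numbers `Sr m k = S_{r,λ}(m+r,k+r)`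
are characterized by `(z+r)_{m,λ} = Σ_k S_{r,λ}(m+r,k+r) z(z-1)⋯(z-k+1)`. -/
theorem XDr_degFall_add (l : ℝ) (hl : l ≠ 0) (r : ℕ)
    (Sr : ℕ → ℕ → ℝ)
    (hSr : ∀ m : ℕ, ∀ z : ℝ,
      degFall l (z + r) m =
        ∑ k ∈ Finset.range (m + 1), Sr m k * ∏ i ∈ Finset.range k, (z - (i : ℝ)))
    (n m : ℕ) :
    opFall l (Xop * Dop + (r : ℝ) • (1 : Module.End ℝ (Polynomial ℝ))) (n + m) =
      ∑ k ∈ Finset.range (m + 1), ∑ j ∈ Finset.range (n + 1),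
        (Sr m k * (n.choose j : ℝ) * degFall l ((k : ℝ) - (m : ℝ) * l) (n - j)) •
          (Xop ^ k *
            opFall l (Xop * Dop + (r : ℝ) • (1 : Module.End ℝ (Polynomial ℝ))) j *
            Dop ^ k) := by
  refine Polynomial.lhom_ext' fun t => LinearMap.ext fun c => ?_
  simp only [LinearMap.comp_apply]
  have hm : ((monomial t) c : Polynomial ℝ) = c • (X ^ t : Polynomial ℝ) :=
    (Polynomial.smul_X_eq_monomial).symm
  rw [hm, map_smul, map_smul]
  congr 1
  rw [opFall_apply]
  simp only [LinearMap.sum_apply, LinearMap.smul_apply, comp_apply, smul_smul,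
    ← Finset.sum_smul]
  congr 1
  exact scalar_id l hl r Sr hSr n m (t : ℝ)
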